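/- Let f be a transcendental entire function, let m > 1, and suppose there exist r_0 > 0 with M(r) > r for all r ≥ r_0, and a real function ψ defined on [r_0, ∞) such that ψ(r) ≥ r and M(ψ(r)) ≥ (ψ(M(r)))^m for all r ≥ r_0. Then f is ε-regular with ε = 1/m. -/

import Mathlib

/-!
Iterating `ψ (M r) ≤ M (ψ r) ^ (1/m) = μ(ψ r)` along the orbit of `R' = max R r₀`, which stays in
`[r₀, ∞)`, and using that `μ` is monotone gives `ψ (Mⁿ R') ≤ μⁿ (ψ R')`. Since `ψ r ≥ r` and `M` is
monotone, `Mⁿ R ≤ Mⁿ R' ≤ ψ (Mⁿ R') ≤ μⁿ (ψ R')`, so `r = ψ R'` witnesses `1/m`-regularity.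
-/

open Set Filter

/-- The maximum modulus of `f` on the circle of radius `r`. -/
noncomputable def maxMod (f : ℂ → ℂ) (r : ℝ) : ℝ :=
  sSup ((fun z => ‖f z‖) '' {z : ℂ | ‖z‖ = r})

/-- The minimum modulus of `f` on the circle of radius `r`. -/
noncomputable def minMod (f : ℂ → ℂ) (r : ℝ) : ℝ :=
  sInf ((fun z => ‖f z‖) '' {z : ℂ | ‖z‖ = r})

/-- `f` is a transcendental entire function: entire and not a polynomial. -/
def TranscendentalEntire (f : ℂ → ℂ) : Prop :=
  Differentiable ℂ f ∧ ¬ ∃ p : Polynomial ℂ, ∀ z, f z = p.eval z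

/-- `μ_ε(r) = M(r)^ε`. -/
noncomputable def muEps (f : ℂ → ℂ) (ε : ℝ) (r : ℝ) : ℝ := (maxMod f r) ^ ε

/-- The fast escaping set `A(f)`. -/
def fastEscaping (f : ℂ → ℂ) : Set ℂ :=
  {z : ℂ | ∀ R : ℝ, 0 < R → (∀ r ≥ R, r < maxMod f r) →
    ∃ ℓ : ℕ, ∀ n : ℕ, (maxMod f)^[n] R ≤ ‖f^[n + ℓ] z‖}

/-- The set `Q_ε(f)`. -/
def Qeps (f : ℂ → ℂ) (ε : ℝ) : Set ℂ :=
  {z : ℂ | ∀ R : ℝ, 0 < R → (∀ r ≥ R, r < muEps f ε r) →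
    ∃ ℓ : ℕ, ∀ n : ℕ, (muEps f ε)^[n] R ≤ ‖f^[n + ℓ] z‖}

/-- The quite fast escaping set `Q(f) = ⋃_{0<ε<1} Q_ε(f)`. -/
def Qset (f : ℂ → ℂ) : Set ℂ := ⋃ ε ∈ Ioo (0:ℝ) 1, Qeps f ε

/-- `f` is `ε`-regular. -/
def epsRegular (f : ℂ → ℂ) (ε : ℝ) : Prop :=
  ∀ R : ℝ, 0 < R → (∀ r ≥ R, r < maxMod f r) →
    ∃ r : ℝ, 0 < r ∧ ∀ n : ℕ, (maxMod f)^[n] R ≤ (muEps f ε)^[n] r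

/-- `f` is weakly regular: `ε`-regular for every `ε ∈ (0,1)`. -/
def weaklyRegular (f : ℂ → ℂ) : Prop := ∀ ε ∈ Ioo (0:ℝ) 1, epsRegular f ε

/-- `f` is log-regular (characterization from Corollary 4.3). -/
def logRegular (f : ℂ → ℂ) : Prop :=
  ∃ r₁ > (1:ℝ), ∃ k > (1:ℝ), ∃ d > (1:ℝ), ∀ r ≥ r₁,
    (maxMod f r) ^ (k * d) ≤ maxMod f (r ^ k)

theorem Monotone.map_iterate_le_iterate {α β : Type*} [Preorder β] {F : α → α} {G : β → β}
    {ψ : α → β} {s : Set α} (hG : Monotone G) (hF : MapsTo F s s)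
    (h : ∀ x ∈ s, ψ (F x) ≤ G (ψ x)) {x : α} (hx : x ∈ s) (n : ℕ) :
    ψ (F^[n] x) ≤ G^[n] (ψ x) := by
  induction n with
  | zero => rfl
  | succ n ih =>
    rw [Function.iterate_succ_apply', Function.iterate_succ_apply']
    exact (h _ (hF.iterate n hx)).trans (hG ih)

lemma maxMod_nonneg (f : ℂ → ℂ) (r : ℝ) : 0 ≤ maxMod f r :=
  Real.sSup_nonneg (by rintro x ⟨z, _, rfl⟩; exact norm_nonneg _)

section MaxMod

variable {f : ℂ → ℂ}

lemma norm_le_maxMod (hf : Continuous f) {z : ℂ} {r : ℝ} (hz : ‖z‖ = r) :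
    ‖f z‖ ≤ maxMod f r := by
  have hsphere : {z : ℂ | ‖z‖ = r} = Metric.sphere 0 r := by
    ext w
    simp
  refine le_csSup ?_ ⟨z, hz, rfl⟩
  rw [hsphere]
  exact ((isCompact_sphere 0 r).image (continuous_norm.comp hf)).bddAbove

/-- On negative radii `maxMod f` is `sSup ∅ = 0`, so monotonicity holds on all of `ℝ`. -/
lemma maxMod_monotone (hf : Differentiable ℂ f) : Monotone (maxMod f) := by
  intro a b hab
  refine Real.sSup_le ?_ (maxMod_nonneg f b)
  rintro x ⟨z, hz, rfl⟩
  refine Complex.norm_le_of_forall_mem_frontier_norm_le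
    (Metric.isBounded_closedBall (x := 0) (r := b)) hf.diffContOnCl (fun w hw => ?_)
    (subset_closure ?_)
  · rw [frontier_closedBall'] at hw
    exact norm_le_maxMod hf.continuous (by simpa using hw)
  · simpa [hz.out] using hab

lemma muEps_monotone (hf : Differentiable ℂ f) {ε : ℝ} (hε : 0 ≤ ε) : Monotone (muEps f ε) :=
  fun _ _ hab => Real.rpow_le_rpow (maxMod_nonneg f _) (maxMod_monotone hf hab) hε

lemma le_muEps_one_div_of_rpow_le {m x s : ℝ} (hm : 0 < m) (hx : 0 ≤ x)
    (h : x ^ m ≤ maxMod f s) : x ≤ muEps f (1 / m) s := by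
  rw [muEps, one_div, Real.le_rpow_inv_iff_of_pos hx (maxMod_nonneg f s) hm]
  exact h

end MaxMod

theorem stmt_12_general (f : ℂ → ℂ) (hf : TranscendentalEntire f) (m : ℝ) (hm : 1 < m)
    (r₀ : ℝ) (hM : ∀ r ≥ r₀, r < maxMod f r) (ψ : ℝ → ℝ)
    (hψ : ∀ r ≥ r₀, r ≤ ψ r ∧ (ψ (maxMod f r)) ^ m ≤ maxMod f (ψ r)) :
    epsRegular f (1 / m) := by
  intro R hR _
  have hR' : max R r₀ ∈ Ici r₀ := le_max_right R r₀
  have hmaps : MapsTo (maxMod f) (Ici r₀) (Ici r₀) := fun r hr => hr.out.trans (hM r hr).le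
  have hstep : ∀ r ∈ Ici r₀, ψ (maxMod f r) ≤ muEps f (1 / m) (ψ r) := fun r hr =>
    le_muEps_one_div_of_rpow_le (by linarith) ((maxMod_nonneg f r).trans (hψ _ (hmaps hr)).1)
      (hψ r hr).2
  refine ⟨ψ (max R r₀), hR.trans_le ((le_max_left R r₀).trans (hψ _ hR').1), fun n => ?_⟩
  calc (maxMod f)^[n] R ≤ (maxMod f)^[n] (max R r₀) :=
        (maxMod_monotone hf.1).iterate n (le_max_left R r₀)
    _ ≤ ψ ((maxMod f)^[n] (max R r₀)) := (hψ _ (hmaps.iterate n hR')).1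
    _ ≤ (muEps f (1 / m))^[n] (ψ (max R r₀)) :=
        (muEps_monotone hf.1 (by positivity)).map_iterate_le_iterate hmaps hstep hR' n

theorem stmt_12 (f : ℂ → ℂ) (hf : TranscendentalEntire f) (m : ℝ) (hm : 1 < m)
    (r₀ : ℝ) (hr₀ : 0 < r₀) (hM : ∀ r ≥ r₀, r < maxMod f r) (ψ : ℝ → ℝ)
    (hψ : ∀ r ≥ r₀, r ≤ ψ r ∧ (ψ (maxMod f r)) ^ m ≤ maxMod f (ψ r)) :
    epsRegular f (1 / m) :=
  stmt_12_general f hf m hm r₀ hM ψ hψ
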